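/- For every integer K ≥ 2 and every a : Fin K → ℝ with a_i > 0 for all i, the integral over the open simplex satisfies ∫_{Δ°} ∏_{i=1}^{K} x_i^{a_i - 1} dx = (∏_{i=1}^K Γ(a_i)) / Γ(∑_{i=1}^K a_i), where the integral is with respect to (K-1)-dimensional Lebesgue measure and x_K := 1 - ∑_{i=1}^{K-1} x_i. In particular the Dirichlet density dir_a integrates to 1, so Dir(a) is a probability measure. -/

import Mathlib

open MeasureTheory

/-- The open simplex `Δ° = {x ∈ ℝ^m : x_i > 0, ∑ x_i < 1}`. -/
def openSimplex (m : ℕ) : Set (Fin m → ℝ) :=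
  {x | (∀ i, 0 < x i) ∧ ∑ i, x i < 1}

/-- Extend `x ∈ ℝ^{K-1}` with the last coordinate `x_K := 1 - ∑_{i<K} x_i`. -/
noncomputable def simplexExt {m : ℕ} (x : Fin m → ℝ) : Fin (m + 1) → ℝ :=
  Fin.snoc x (1 - ∑ i, x i)

open Classical in
/-- The Dirichlet density with parameter `a` on `ℝ^{K-1}` (with `K = m+1`). -/
noncomputable def dirichletDensity {m : ℕ} (a : Fin (m + 1) → ℝ) (x : Fin m → ℝ) : ℝ :=
  if x ∈ openSimplex m then
    (Real.Gamma (∑ i, a i) / ∏ i, Real.Gamma (a i)) * ∏ i, simplexExt x i ^ (a i - 1)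
  else 0

section DirichletAuxSec
open Set


namespace DirichletAux

lemma beta_complex_eq (p q : ℝ) :
    Complex.betaIntegral p q
      = ((∫ t in (0:ℝ)..1, t ^ (p - 1) * (1 - t) ^ (q - 1) : ℝ) : ℂ) := by
  rw [Complex.betaIntegral, ← intervalIntegral.integral_ofReal]
  refine intervalIntegral.integral_congr fun x hx => ?_
  rw [Set.uIcc_of_le zero_le_one] at hx
  rw [Complex.ofReal_mul, Complex.ofReal_cpow hx.1, Complex.ofReal_cpow (by linarith [hx.2])]
  push_cast
  ring

lemma betaReal_eq (p q : ℝ) (hp : 0 < p) (hq : 0 < q) :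
    ∫ t in (0:ℝ)..1, t ^ (p - 1) * (1 - t) ^ (q - 1)
      = Real.Gamma p * Real.Gamma q / Real.Gamma (p + q) := by
  have key := Complex.Gamma_mul_Gamma_eq_betaIntegral (s := (p:ℂ)) (t := (q:ℂ))
    (by simpa using hp) (by simpa using hq)
  rw [beta_complex_eq] at key
  have h1 : (p:ℂ) + (q:ℂ) = ((p + q : ℝ) : ℂ) := by push_cast; ring
  rw [h1, Complex.Gamma_ofReal, Complex.Gamma_ofReal, Complex.Gamma_ofReal] at key
  have key' : Real.Gamma p * Real.Gamma q
      = Real.Gamma (p + q) * ∫ t in (0:ℝ)..1, t ^ (p - 1) * (1 - t) ^ (q - 1) := by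
    exact_mod_cast key
  have hne : Real.Gamma (p + q) ≠ 0 := (Real.Gamma_pos_of_pos (by linarith)).ne'
  field_simp [hne] at key' ⊢
  linarith [key']

lemma betaReal_integrableOn (p q : ℝ) (hp : 0 < p) (hq : 0 < q) :
    IntegrableOn (fun t : ℝ => t ^ (p - 1) * (1 - t) ^ (q - 1)) (Ioc 0 1) := by
  have h := Complex.betaIntegral_convergent (u := (p:ℂ)) (v := (q:ℂ))
    (by simpa using hp) (by simpa using hq)
  rw [intervalIntegrable_iff, Set.uIoc_of_le zero_le_one] at h
  have h2 : IntegrableOn (fun x : ℝ => ((x:ℂ) ^ ((p:ℂ) - 1) * (1 - (x:ℂ)) ^ ((q:ℂ) - 1)).re)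
      (Ioc 0 1) := h.re
  refine IntegrableOn.congr_fun h2 (fun x hx => ?_) measurableSet_Ioc
  have e1 : ((p:ℂ) - 1) = ((p - 1 : ℝ) : ℂ) := by push_cast; ring
  have e2 : ((q:ℂ) - 1) = ((q - 1 : ℝ) : ℂ) := by push_cast; ring
  have e3 : (1 - (x:ℂ)) = ((1 - x : ℝ) : ℂ) := by push_cast; ring
  rw [e1, e2, e3, ← Complex.ofReal_cpow hx.1.le, ← Complex.ofReal_cpow (by linarith [hx.2]),
    ← Complex.ofReal_mul, Complex.ofReal_re]

end DirichletAux

namespace DirichletAux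

lemma betaScaled_eq (p q : ℝ) (hp : 0 < p) (hq : 0 < q) {c : ℝ} (hc : 0 < c) :
    ∫ t in (0:ℝ)..c, t ^ (p - 1) * (c - t) ^ (q - 1)
      = c ^ (p + q - 1) * (Real.Gamma p * Real.Gamma q / Real.Gamma (p + q)) := by
  have h0 : (∫ t in (0:ℝ)..c, t ^ (p - 1) * (c - t) ^ (q - 1))
      = c • ∫ x in (0:ℝ)..1, (c * x) ^ (p - 1) * (c - c * x) ^ (q - 1) := by
    have := intervalIntegral.smul_integral_comp_mul_left
      (f := fun t => t ^ (p - 1) * (c - t) ^ (q - 1)) (a := 0) (b := 1) c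
    simpa using this.symm
  rw [h0]
  have h1 : ∀ x ∈ Set.uIcc (0:ℝ) 1,
      (c * x) ^ (p - 1) * (c - c * x) ^ (q - 1)
        = (c ^ (p - 1) * c ^ (q - 1)) * (x ^ (p - 1) * (1 - x) ^ (q - 1)) := by
    intro x hx
    rw [Set.uIcc_of_le zero_le_one] at hx
    have e : c - c * x = c * (1 - x) := by ring
    rw [e, Real.mul_rpow hc.le hx.1, Real.mul_rpow hc.le (by linarith [hx.2])]
    ring
  rw [intervalIntegral.integral_congr h1, intervalIntegral.integral_const_mul,
    betaReal_eq p q hp hq]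
  have hcpq : c * (c ^ (p - 1) * c ^ (q - 1)) = c ^ (p + q - 1) := by
    nth_rewrite 1 [← Real.rpow_one c]
    rw [← Real.rpow_add hc, ← Real.rpow_add hc]
    ring_nf
  rw [smul_eq_mul, ← mul_assoc, hcpq]

lemma betaScaled_integrableOn (p q : ℝ) (hp : 0 < p) (hq : 0 < q) {c : ℝ} (hc : 0 < c) :
    IntegrableOn (fun t : ℝ => t ^ (p - 1) * (c - t) ^ (q - 1)) (Set.Ioc 0 c) := by
  have h := betaReal_integrableOn p q hp hq
  have h1 : IntervalIntegrable (fun t : ℝ => t ^ (p-1) * (1-t) ^ (q-1)) volume 0 1 := by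
    rw [intervalIntegrable_iff, Set.uIoc_of_le zero_le_one]; exact h
  have h2 := h1.comp_mul_left (c := c⁻¹)
  rw [intervalIntegrable_iff] at h2
  rw [show (0:ℝ)/c⁻¹ = 0 by simp, show (1:ℝ)/c⁻¹ = c by field_simp,
    Set.uIoc_of_le hc.le] at h2
  have h3 := h2.const_mul (c ^ (p-1) * c ^ (q-1))
  refine IntegrableOn.congr_fun h3 (fun t ht => ?_) measurableSet_Ioc
  have e1 : c⁻¹ * t = t / c := by ring
  have e2 : (1 : ℝ) - t / c = (c - t) / c := by field_simp
  rw [e1, e2, Real.div_rpow ht.1.le hc.le, Real.div_rpow (by linarith [ht.2] : 0 ≤ c - t) hc.le]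
  field_simp

end DirichletAux

namespace DirichletAux

open scoped ENNReal

lemma inner_lintegral (p q : ℝ) (hp : 0 < p) (hq : 0 < q) {c : ℝ} (hc : 0 < c) :
    ∫⁻ t in Set.Ioo (0:ℝ) c, ENNReal.ofReal (t ^ (p - 1) * (c - t) ^ (q - 1))
      = ENNReal.ofReal (c ^ (p + q - 1) * (Real.Gamma p * Real.Gamma q / Real.Gamma (p + q))) := by
  rw [← ofReal_integral_eq_lintegral_ofReal
    ((betaScaled_integrableOn p q hp hq hc).mono_set Set.Ioo_subset_Ioc_self)
    (by
      filter_upwards [ae_restrict_mem measurableSet_Ioo] with t ht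
      exact mul_nonneg (Real.rpow_nonneg ht.1.le _)
        (Real.rpow_nonneg (by linarith [ht.2]) _))]
  congr 1
  rw [← integral_Ioc_eq_integral_Ioo, ← intervalIntegral.integral_of_le hc.le]
  exact betaScaled_eq p q hp hq hc

-- σ for "simplex-related" measurability
lemma measurable_simplexExt {m : ℕ} (i : Fin (m + 1)) :
    Measurable fun x : Fin m → ℝ => simplexExt x i := by
  refine Fin.lastCases ?_ ?_ i
  · simp only [simplexExt, Fin.snoc_last]
    exact measurable_const.sub (Finset.measurable_sum _ fun j _ => measurable_pi_apply j)
  · intro j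
    simp only [simplexExt, Fin.snoc_castSucc]
    exact measurable_pi_apply j

lemma measurable_prodFn {m : ℕ} (a : Fin (m + 1) → ℝ) :
    Measurable fun x : Fin m → ℝ => ∏ i, simplexExt x i ^ (a i - 1) :=
  Finset.measurable_prod _ fun i _ => by
    have h := measurable_simplexExt (m := m) i
    fun_prop

lemma measurableSet_openSimplex (m : ℕ) : MeasurableSet (openSimplex m) := by
  have : openSimplex m
      = (⋂ i, {x : Fin m → ℝ | 0 < x i}) ∩ {x : Fin m → ℝ | ∑ i, x i < 1} := by
    ext x; simp [openSimplex]
  rw [this]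
  exact (MeasurableSet.iInter fun i =>
      measurableSet_lt measurable_const (measurable_pi_apply i)).inter
    (measurableSet_lt (Finset.measurable_sum _ fun j _ => measurable_pi_apply j) measurable_const)

lemma simplexExt_pos {m : ℕ} {x : Fin m → ℝ} (hx : x ∈ openSimplex m) (i : Fin (m + 1)) :
    0 < simplexExt x i := by
  refine Fin.lastCases ?_ ?_ i
  · simp only [simplexExt, Fin.snoc_last]
    linarith [hx.2]
  · intro j
    simp only [simplexExt, Fin.snoc_castSucc]
    exact hx.1 j

lemma snoc_mem_iff {m : ℕ} (y : Fin m → ℝ) (t : ℝ) :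
    Fin.snoc y t ∈ openSimplex (m + 1)
      ↔ ((∀ i, 0 < y i) ∧ 0 < t ∧ ∑ i, y i + t < 1) := by
  simp only [openSimplex, Set.mem_setOf_eq, Fin.sum_snoc]
  constructor
  · rintro ⟨h1, h2⟩
    refine ⟨fun i => ?_, ?_, h2⟩
    · simpa using h1 i.castSucc
    · simpa using h1 (Fin.last m)
  · rintro ⟨h1, h2, h3⟩
    refine ⟨fun i => ?_, h3⟩
    refine Fin.lastCases ?_ ?_ i
    · simpa using h2
    · intro j; simpa using h1 j

end DirichletAux

namespace DirichletAux

open scoped ENNReal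

lemma snoc_prod_eq {m : ℕ} (a : Fin (m + 2) → ℝ) (y : Fin m → ℝ) (t : ℝ) :
    (∏ i, simplexExt (Fin.snoc y t) i ^ (a i - 1))
      = (∏ i : Fin m, y i ^ (a i.castSucc.castSucc - 1))
        * (t ^ (a ((Fin.last m).castSucc) - 1)
        * ((1 - ∑ i, y i - t) ^ (a (Fin.last (m + 1)) - 1))) := by
  have hsum : ∑ i, (Fin.snoc y t : Fin (m + 1) → ℝ) i = ∑ i, y i + t := Fin.sum_snoc _ _
  rw [Fin.prod_univ_castSucc (n := m + 1)]
  rw [Fin.prod_univ_castSucc (n := m)]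
  simp only [simplexExt, hsum, Fin.snoc_castSucc, Fin.snoc_last]
  rw [show (1 : ℝ) - (∑ i, y i + t) = 1 - ∑ i, y i - t by ring, mul_assoc]

lemma dirichlet_lintegral :
    ∀ (m : ℕ) (a : Fin (m + 1) → ℝ), (∀ i, 0 < a i) →
      ∫⁻ x in openSimplex m, ENNReal.ofReal (∏ i, simplexExt x i ^ (a i - 1))
        = ENNReal.ofReal ((∏ i, Real.Gamma (a i)) / Real.Gamma (∑ i, a i)) := by
  intro m
  induction m with
  | zero =>
    intro a ha
    have hS : openSimplex 0 = Set.univ := by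
      ext x
      simp [openSimplex]
    have hone : ∀ x : Fin 0 → ℝ, (∏ i, simplexExt x i ^ (a i - 1)) = 1 := by
      intro x
      rw [Fin.prod_univ_one]
      have : simplexExt x 0 = 1 := by
        show (Fin.snoc x (1 - ∑ i, x i) : Fin 1 → ℝ) 0 = 1
        rw [show (0 : Fin 1) = Fin.last 0 from rfl, Fin.snoc_last]
        simp
      rw [this, Real.one_rpow]
    have hvol : (volume : Measure (Fin 0 → ℝ)) Set.univ = 1 := by
      simp [MeasureTheory.volume_pi, Measure.pi_univ]
    simp only [hS, hone]
    rw [Measure.restrict_univ, lintegral_const, hvol, mul_one]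
    rw [Fin.prod_univ_one, Fin.sum_univ_one]
    rw [div_self (Real.Gamma_pos_of_pos (ha 0)).ne', ENNReal.ofReal_one]
  | succ m ih =>
    intro a ha
    set p := a ((Fin.last m).castSucc) with hp_def
    set q := a (Fin.last (m + 1)) with hq_def
    have hp : 0 < p := ha _
    have hq : 0 < q := ha _
    set B := Real.Gamma p * Real.Gamma q / Real.Gamma (p + q) with hB_def
    have hΓpq : 0 < Real.Gamma (p + q) := Real.Gamma_pos_of_pos (by linarith)
    have hB : 0 ≤ B := by
      have := Real.Gamma_pos_of_pos hp
      have := Real.Gamma_pos_of_pos hq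
      positivity
    set b : Fin (m + 1) → ℝ :=
      Fin.snoc (fun i : Fin m => a i.castSucc.castSucc) (p + q) with hb_def
    have hb : ∀ i, 0 < b i := by
      intro i
      refine Fin.lastCases ?_ ?_ i
      · simp only [hb_def, Fin.snoc_last]; linarith
      · intro j; simp only [hb_def, Fin.snoc_castSucc]; exact ha _
    -- the function on the big space
    set F : (Fin (m + 1) → ℝ) → ℝ≥0∞ :=
      Set.indicator (openSimplex (m + 1))
        (fun x => ENNReal.ofReal (∏ i, simplexExt x i ^ (a i - 1))) with hF_def
    have hFmeas : Measurable F :=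
      ((measurable_prodFn a).ennreal_ofReal).indicator (measurableSet_openSimplex (m + 1))
    have h1 : ∫⁻ x in openSimplex (m + 1),
        ENNReal.ofReal (∏ i, simplexExt x i ^ (a i - 1)) = ∫⁻ x, F x :=
      (lintegral_indicator (measurableSet_openSimplex (m + 1)) _).symm
    -- split off the last coordinate
    set e := MeasurableEquiv.piFinSuccAbove (fun _ : Fin (m + 1) => ℝ) (Fin.last m) with he_def
    have hesymm : ∀ (t : ℝ) (y : Fin m → ℝ), e.symm (t, y) = Fin.snoc y t := by
      intro t y
      show (Fin.insertNthEquiv (fun _ : Fin (m + 1) => ℝ) (Fin.last m)) (t, y) = _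
      simp [Fin.insertNth_last', Fin.snocEquiv]
    have hmp : MeasurePreserving e.symm volume volume :=
      (volume_preserving_piFinSuccAbove (fun _ : Fin (m + 1) => ℝ) (Fin.last m)).symm
    have h2 : ∫⁻ x, F x = ∫⁻ z : ℝ × (Fin m → ℝ), F (e.symm z) :=
      (hmp.lintegral_comp hFmeas).symm
    have hFz : Measurable fun z : ℝ × (Fin m → ℝ) => F (e.symm z) :=
      hFmeas.comp e.symm.measurable
    have h3 : (∫⁻ z : ℝ × (Fin m → ℝ), F (e.symm z))
        = ∫⁻ t : ℝ, ∫⁻ y : Fin m → ℝ, F (Fin.snoc y t) := by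
      rw [MeasureTheory.Measure.volume_eq_prod, lintegral_prod _ hFz.aemeasurable]
      exact lintegral_congr fun t => lintegral_congr fun y => by rw [hesymm]
    have h4 : (∫⁻ t : ℝ, ∫⁻ y : Fin m → ℝ, F (Fin.snoc y t))
        = ∫⁻ y : Fin m → ℝ, ∫⁻ t : ℝ, F (Fin.snoc y t) := by
      refine lintegral_lintegral_swap ?_
      have huncurry : (Function.uncurry fun (t : ℝ) (y : Fin m → ℝ) => F (Fin.snoc y t))
          = fun z : ℝ × (Fin m → ℝ) => F (e.symm z) := by
        funext z
        cases z with
        | mk t y => simp [Function.uncurry, hesymm]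
      rw [huncurry]
      exact hFz.aemeasurable
    have hinner : ∀ y : Fin m → ℝ, (∫⁻ t : ℝ, F (Fin.snoc y t))
        = Set.indicator (openSimplex m)
            (fun y => ENNReal.ofReal B
              * ENNReal.ofReal (∏ i, simplexExt y i ^ (b i - 1))) y := by
      intro y
      by_cases hy : y ∈ openSimplex m
      · set c := 1 - ∑ i, y i with hc_def
        have hc : 0 < c := by
          have := hy.2
          simp only [hc_def]
          linarith
        set A := ∏ i : Fin m, y i ^ (a i.castSucc.castSucc - 1) with hA_def
        have hA : 0 ≤ A := Finset.prod_nonneg fun i _ => Real.rpow_nonneg (hy.1 i).le _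
        have hmem : ∀ t : ℝ, (Fin.snoc y t ∈ openSimplex (m + 1)) ↔ t ∈ Set.Ioo 0 c := by
          intro t
          rw [snoc_mem_iff]
          constructor
          · rintro ⟨-, h2', h3'⟩
            exact ⟨h2', by simp only [hc_def]; linarith⟩
          · rintro ⟨h2', h3'⟩
            simp only [Set.mem_Ioo, hc_def] at h3'
            exact ⟨hy.1, h2', by linarith⟩
        have hFval : ∀ t : ℝ, F (Fin.snoc y t)
            = Set.indicator (Set.Ioo 0 c)
                (fun t => ENNReal.ofReal (A * (t ^ (p - 1) * (c - t) ^ (q - 1)))) t := by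
          intro t
          rw [hF_def]
          by_cases ht : t ∈ Set.Ioo 0 c
          · rw [Set.indicator_of_mem ((hmem t).2 ht), Set.indicator_of_mem ht, snoc_prod_eq]
          · rw [Set.indicator_of_notMem (fun h => ht ((hmem t).1 h)),
              Set.indicator_of_notMem ht]
        have hmeas_t : Measurable fun t : ℝ =>
            ENNReal.ofReal (t ^ (p - 1) * (c - t) ^ (q - 1)) := by fun_prop
        calc ∫⁻ t : ℝ, F (Fin.snoc y t)
            = ∫⁻ t in Set.Ioo (0:ℝ) c,
                ENNReal.ofReal (A * (t ^ (p - 1) * (c - t) ^ (q - 1))) := by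
              simp_rw [hFval]
              exact lintegral_indicator measurableSet_Ioo _
          _ = ENNReal.ofReal A * ∫⁻ t in Set.Ioo (0:ℝ) c,
                ENNReal.ofReal (t ^ (p - 1) * (c - t) ^ (q - 1)) := by
              simp_rw [ENNReal.ofReal_mul hA]
              exact lintegral_const_mul _ hmeas_t
          _ = ENNReal.ofReal A * ENNReal.ofReal (c ^ (p + q - 1) * B) := by
              rw [inner_lintegral p q hp hq hc]
          _ = Set.indicator (openSimplex m)
                (fun y => ENNReal.ofReal B
                  * ENNReal.ofReal (∏ i, simplexExt y i ^ (b i - 1))) y := by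
              rw [Set.indicator_of_mem hy, ← ENNReal.ofReal_mul hA, ← ENNReal.ofReal_mul hB]
              have hprod : (∏ i, simplexExt y i ^ (b i - 1)) = A * c ^ (p + q - 1) := by
                rw [Fin.prod_univ_castSucc (n := m)]
                simp only [simplexExt, Fin.snoc_castSucc, Fin.snoc_last, hb_def, ← hc_def]
                rfl
              rw [hprod]
              congr 1
              ring
      · rw [Set.indicator_of_notMem hy]
        have hzero : ∀ t : ℝ, F (Fin.snoc y t) = 0 := by
          intro t
          rw [hF_def, Set.indicator_of_notMem]
          intro hmem'
          rw [snoc_mem_iff] at hmem'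
          obtain ⟨h1', h2', h3'⟩ := hmem'
          exact hy ⟨h1', by linarith⟩
        simp only [hzero, lintegral_zero]
    rw [h1, h2, h3, h4]
    rw [lintegral_congr hinner,
      lintegral_indicator (measurableSet_openSimplex m) _,
      lintegral_const_mul _ ((measurable_prodFn b).ennreal_ofReal),
      ih b hb, ← ENNReal.ofReal_mul hB]
    congr 1
    have hsumb : ∑ i, b i = ∑ i, a i := by
      rw [hb_def, Fin.sum_snoc, Fin.sum_univ_castSucc (n := m + 1),
        Fin.sum_univ_castSucc (n := m), hp_def, hq_def]
      ring
    have hprodb : (∏ i, Real.Gamma (b i))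
        = (∏ i : Fin m, Real.Gamma (a i.castSucc.castSucc)) * Real.Gamma (p + q) := by
      rw [Fin.prod_univ_castSucc (n := m)]
      simp only [hb_def, Fin.snoc_castSucc, Fin.snoc_last]
    have hproda : (∏ i, Real.Gamma (a i))
        = ((∏ i : Fin m, Real.Gamma (a i.castSucc.castSucc)) * Real.Gamma p)
          * Real.Gamma q := by
      rw [Fin.prod_univ_castSucc (n := m + 1), Fin.prod_univ_castSucc (n := m), hp_def, hq_def]
    have hΓsum : Real.Gamma (∑ i, a i) ≠ 0 := by
      refine (Real.Gamma_pos_of_pos ?_).ne'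
      refine Finset.sum_pos (fun i _ => ha i) Finset.univ_nonempty
    rw [hsumb, hprodb, hproda, hB_def]
    field_simp

end DirichletAux

end DirichletAuxSec

/-- The Dirichlet integral: `∫_{Δ°} ∏ x_i^{a_i-1} dx = ∏ Γ(a_i) / Γ(∑ a_i)`,
so the Dirichlet density integrates to 1 and `Dir(a)` is a probability measure.
Here `K = m + 1 ≥ 2`. -/
theorem dirichlet_integral (m : ℕ) (hm : 1 ≤ m) (a : Fin (m + 1) → ℝ)
    (ha : ∀ i, 0 < a i) :
    (∫ x in openSimplex m, ∏ i, simplexExt x i ^ (a i - 1))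
      = (∏ i, Real.Gamma (a i)) / Real.Gamma (∑ i, a i) ∧
    (∫ x, dirichletDensity a x) = 1 ∧
    IsProbabilityMeasure
      (volume.withDensity fun x => ENNReal.ofReal (dirichletDensity a x)) := by
  have hS := DirichletAux.measurableSet_openSimplex m
  have hmeasf := DirichletAux.measurable_prodFn a
  have hΓprod : 0 < ∏ i, Real.Gamma (a i) :=
    Finset.prod_pos fun i _ => Real.Gamma_pos_of_pos (ha i)
  have hΓsum : 0 < Real.Gamma (∑ i, a i) :=
    Real.Gamma_pos_of_pos (Finset.sum_pos (fun i _ => ha i) Finset.univ_nonempty)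
  have hR : 0 ≤ (∏ i, Real.Gamma (a i)) / Real.Gamma (∑ i, a i) := by positivity
  have hkey := DirichletAux.dirichlet_lintegral m a ha
  have hpart1 : (∫ x in openSimplex m, ∏ i, simplexExt x i ^ (a i - 1))
      = (∏ i, Real.Gamma (a i)) / Real.Gamma (∑ i, a i) := by
    rw [MeasureTheory.integral_eq_lintegral_of_nonneg_ae
      (by
        filter_upwards [ae_restrict_mem hS] with x hx
        exact Finset.prod_nonneg fun i _ =>
          Real.rpow_nonneg (DirichletAux.simplexExt_pos hx i).le _)
      hmeasf.aestronglyMeasurable]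
    rw [hkey, ENNReal.toReal_ofReal hR]
  have hdind : ∀ x, dirichletDensity a x
      = Set.indicator (openSimplex m)
          (fun x => (Real.Gamma (∑ i, a i) / ∏ i, Real.Gamma (a i))
            * ∏ i, simplexExt x i ^ (a i - 1)) x := by
    intro x
    by_cases hx : x ∈ openSimplex m <;>
      simp [dirichletDensity, hx, Set.indicator_of_mem, Set.indicator_of_notMem]
  have hC : (Real.Gamma (∑ i, a i) / ∏ i, Real.Gamma (a i))
      * ((∏ i, Real.Gamma (a i)) / Real.Gamma (∑ i, a i)) = 1 := by
    field_simp
  have hC0 : 0 ≤ Real.Gamma (∑ i, a i) / ∏ i, Real.Gamma (a i) := by positivity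
  have hpart2 : (∫ x, dirichletDensity a x) = 1 := by
    simp_rw [hdind]
    rw [MeasureTheory.integral_indicator hS, integral_const_mul, hpart1, hC]
  refine ⟨hpart1, hpart2, ?_⟩
  have hlint : ∫⁻ x, ENNReal.ofReal (dirichletDensity a x) = 1 := by
    have hofReal : ∀ x, ENNReal.ofReal (dirichletDensity a x)
        = Set.indicator (openSimplex m)
            (fun x => ENNReal.ofReal ((Real.Gamma (∑ i, a i) / ∏ i, Real.Gamma (a i))
              * ∏ i, simplexExt x i ^ (a i - 1))) x := by
      intro x
      rw [hdind x]
      by_cases hx : x ∈ openSimplex m <;> simp [hx]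
    simp_rw [hofReal]
    rw [lintegral_indicator hS]
    simp_rw [ENNReal.ofReal_mul hC0]
    rw [lintegral_const_mul _ hmeasf.ennreal_ofReal, hkey, ← ENNReal.ofReal_mul hC0, hC,
      ENNReal.ofReal_one]
  constructor
  rw [MeasureTheory.withDensity_apply _ MeasurableSet.univ, Measure.restrict_univ, hlint]
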